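/- Let q = 4n − 1 be a prime power with q ≡ 3 (mod 8). Then there exist circulant matrices A, B, C, D of order n with entries in {−1, +1} (indexed by ℤ/nℤ) such that A·Aᵀ + B·Bᵀ + C·Cᵀ + D·Dᵀ = 4n·I, (I − A)ᵀ = −(I − A) (equivalently A + Aᵀ = 2·I), Bᵀ = B, and C = D; consequently there exists a (skew) Hadamard matrix of order 4n of Goethals–Seidel type. -/

import Mathlib

/-!
Let `K = 𝔽_{q²}`, let `w` generate `Kˣ`, and put `θ = w ^ (2n)`, `μ = w ^ (q + 1)` and
`ξ = w ^ (4 (q - 1))`. Since `θ ^ q = -θ`, `D(x, y) = (x y^q - x^q y) / θ` is an alternating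
`𝔽_q`-bilinear form on `K` with values in `𝔽_q`; let `χ` be the quadratic character of `𝔽_q`,
for which `χ(μ) = χ(-1) = -1` because `q ≡ 3 (mod 4)`. For `c = 0, 2n, 1, q` the matrices
`M_c(s, u) = χ(D(ξ^s, w^c ξ^u))` indexed by `ℤ/nℤ` are circulant because `ξ` has norm one;
`M_0` is skew with zero diagonal as `D` is alternating, while `M_{2n}` is symmetric and
`M_q = -M_1ᵀ` by `D(x^q, y^q) = -D(x, y)`.

As `n` is odd, `w^0, w^{2n}, w, w^q` represent the four cosets of `⟨w ^ 4⟩ = 𝔽_qˣ × ⟨ξ⟩`.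
Hence `D(ξ^s, w^c ξ^u) = 0`, i.e. `w^c ξ^(u - s) ∈ 𝔽_qˣ`, only for `c = 0` and `u = s`, and
`Kˣ` is the disjoint union of the sets `w^c ξ^u 𝔽_qˣ`. Summing over this decomposition,
`(q - 1) ∑_c (M_c M_cᵀ)(s, t) = ∑_{z ∈ K} χ(D(ξ^s, z)) χ(D(ξ^t, z))`, which vanishes for
`s ≠ t` because `z ↦ (D(ξ^s, z), D(ξ^t, z))` is a bijection `K ≃ 𝔽_q²` and `∑ χ = 0`. So
`A = I + M_0`, `B = M_{2n}` and `C = D = M_1` satisfy `AAᵀ + BBᵀ + 2CCᵀ = 4n I`, and the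
Goethals–Seidel array built from them is skew Hadamard, since circulant matrices commute and
`X R = R Xᵀ` for circulant `X` and the back-diagonal matrix `R`.
-/

open Matrix

/-- A matrix indexed by `ZMod v` is circulant if its entries depend only on
the difference of the indices, i.e. it is invariant under simultaneous shifts. -/
def IsCirculant {v : ℕ} (M : Matrix (ZMod v) (ZMod v) ℤ) : Prop :=
  ∀ i j k : ZMod v, M (i + k) (j + k) = M i j

/-- The back-diagonal permutation matrix `R` of order `v`:
`R i j = 1` if `i + j = -1` in `ZMod v`, and `0` otherwise. -/
def backDiag (v : ℕ) : Matrix (ZMod v) (ZMod v) ℤ :=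
  Matrix.of fun i j => if i + j = -1 then 1 else 0

/-- The Goethals–Seidel array, built from four matrices of order `v`,
as a `4v × 4v` matrix indexed by `Fin 4 × ZMod v`. -/
def GSarray (v : ℕ) [NeZero v] (A B C D : Matrix (ZMod v) (ZMod v) ℤ) :
    Matrix (Fin 4 × ZMod v) (Fin 4 × ZMod v) ℤ :=
  Matrix.of fun p q =>
    (![![A, B * backDiag v, C * backDiag v, D * backDiag v],
       ![-(B * backDiag v), A, Dᵀ * backDiag v, -(Cᵀ * backDiag v)],
       ![-(C * backDiag v), -(Dᵀ * backDiag v), A, Bᵀ * backDiag v],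
       ![-(D * backDiag v), Cᵀ * backDiag v, -(Bᵀ * backDiag v), A]] p.1 q.1) p.2 q.2

namespace IsCirculant

variable {v : ℕ} {X Y : Matrix (ZMod v) (ZMod v) ℤ}

theorem apply_eq_apply_sub (hX : IsCirculant X) (i j : ZMod v) : X i j = X (i - j) 0 := by
  simpa using hX (i - j) 0 j

theorem transpose (hX : IsCirculant X) : IsCirculant Xᵀ := fun i j k => hX j i k

theorem one : IsCirculant (1 : Matrix (ZMod v) (ZMod v) ℤ) := fun i j k => by
  simp only [Matrix.one_apply, add_left_inj]

theorem add (hX : IsCirculant X) (hY : IsCirculant Y) : IsCirculant (X + Y) := fun i j k => by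
  simp only [Matrix.add_apply, hX i j k, hY i j k]

variable [NeZero v]

theorem mul_comm (hX : IsCirculant X) (hY : IsCirculant Y) : X * Y = Y * X := by
  ext i j
  simp only [Matrix.mul_apply]
  refine Fintype.sum_equiv (Equiv.subLeft (i + j)) _ _ fun k => ?_
  simp only [Equiv.subLeft_apply, hX.apply_eq_apply_sub _ j, hX.apply_eq_apply_sub i,
    hY.apply_eq_apply_sub _ j, hY.apply_eq_apply_sub i]
  rw [_root_.mul_comm]
  congr 2 <;> ring

theorem mul_left_comm (hX : IsCirculant X) (hY : IsCirculant Y)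
    (Z : Matrix (ZMod v) (ZMod v) ℤ) : X * (Y * Z) = Y * (X * Z) := by
  rw [← Matrix.mul_assoc, hX.mul_comm hY, Matrix.mul_assoc]

end IsCirculant

theorem transpose_backDiag {v : ℕ} : (backDiag v)ᵀ = backDiag v := by
  ext i j
  simp [backDiag, add_comm]

section BackDiag

variable {v : ℕ} [NeZero v]

theorem mul_backDiag_apply (X : Matrix (ZMod v) (ZMod v) ℤ) (i j : ZMod v) :
    (X * backDiag v) i j = X i (-1 - j) := by
  simp [Matrix.mul_apply, backDiag, ← eq_sub_iff_add_eq]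

theorem backDiag_mul_apply (X : Matrix (ZMod v) (ZMod v) ℤ) (i j : ZMod v) :
    (backDiag v * X) i j = X (-1 - i) j := by
  rw [← Matrix.transpose_apply (backDiag v * X), Matrix.transpose_mul, transpose_backDiag,
    mul_backDiag_apply, Matrix.transpose_apply]

theorem backDiag_mul_backDiag : backDiag v * backDiag v = 1 := by
  ext i j
  rw [mul_backDiag_apply, backDiag, Matrix.of_apply, Matrix.one_apply]
  congr 1
  exact propext ⟨fun h => by linear_combination h, fun h => by rw [h]; ring⟩

theorem IsCirculant.mul_backDiag {X : Matrix (ZMod v) (ZMod v) ℤ} (hX : IsCirculant X) :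
    X * backDiag v = backDiag v * Xᵀ := by
  ext i j
  rw [mul_backDiag_apply, backDiag_mul_apply, Matrix.transpose_apply,
    hX.apply_eq_apply_sub, hX.apply_eq_apply_sub j]
  ring_nf

theorem IsCirculant.backDiag_mul {Y : Matrix (ZMod v) (ZMod v) ℤ} (hY : IsCirculant Y) :
    backDiag v * Y = Yᵀ * backDiag v := by
  rw [hY.transpose.mul_backDiag, Matrix.transpose_transpose]

theorem IsCirculant.backDiag_mul_mul {Y : Matrix (ZMod v) (ZMod v) ℤ} (hY : IsCirculant Y)
    (Z : Matrix (ZMod v) (ZMod v) ℤ) : backDiag v * (Y * Z) = Yᵀ * (backDiag v * Z) := by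
  rw [← Matrix.mul_assoc, hY.backDiag_mul, Matrix.mul_assoc]

end BackDiag

section GoethalsSeidel

variable {v : ℕ} [NeZero v]

def gsBlocks (v : ℕ) [NeZero v] (A B C D : Matrix (ZMod v) (ZMod v) ℤ) :
    Matrix (Fin 4) (Fin 4) (Matrix (ZMod v) (ZMod v) ℤ) :=
  Matrix.of ![![A, B * backDiag v, C * backDiag v, D * backDiag v],
    ![-(B * backDiag v), A, Dᵀ * backDiag v, -(Cᵀ * backDiag v)],
    ![-(C * backDiag v), -(Dᵀ * backDiag v), A, Bᵀ * backDiag v],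
    ![-(D * backDiag v), Cᵀ * backDiag v, -(Bᵀ * backDiag v), A]]

theorem GSarray_eq_comp (A B C D : Matrix (ZMod v) (ZMod v) ℤ) :
    GSarray v A B C D = Matrix.comp _ _ _ _ _ (gsBlocks v A B C D) := rfl

variable {A B C D : Matrix (ZMod v) (ZMod v) ℤ}

/- Moving every `backDiag v` to the right and sorting the commuting circulant factors brings
each block to a normal form in which the off-diagonal blocks visibly cancel. -/
theorem gsBlocks_mul_transpose (hA : IsCirculant A) (hB : IsCirculant B)
    (hC : IsCirculant C) (hD : IsCirculant D) (c : ℤ)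
    (hgram : A * Aᵀ + B * Bᵀ + C * Cᵀ + D * Dᵀ = c • 1) :
    gsBlocks v A B C D * (gsBlocks v A B C D)ᵀ.map (·ᵀ) = c • 1 := by
  ext a b : 1
  fin_cases a <;> fin_cases b <;>
    simp [gsBlocks, Matrix.mul_apply, Fin.sum_univ_four, Matrix.transpose_mul,
      transpose_backDiag, Matrix.mul_assoc, backDiag_mul_backDiag, IsCirculant.backDiag_mul_mul,
      IsCirculant.backDiag_mul, IsCirculant.mul_comm, IsCirculant.mul_left_comm,
      IsCirculant.transpose, hA, hB, hC, hD]
  all_goals simpa [add_comm, add_left_comm, add_assoc] using hgram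

theorem gsBlocks_add_transpose (hB : IsCirculant B) (hC : IsCirculant C) (hD : IsCirculant D)
    (hskew : A + Aᵀ = (2 : ℤ) • 1) :
    gsBlocks v A B C D + (gsBlocks v A B C D)ᵀ.map (·ᵀ) = (2 : ℤ) • 1 := by
  ext a b : 1
  fin_cases a <;> fin_cases b <;>
    simp [gsBlocks, Matrix.transpose_mul, transpose_backDiag, IsCirculant.backDiag_mul,
      IsCirculant.transpose, hB, hC, hD]
  all_goals simpa using hskew

theorem GSarray_mul_transpose (hA : IsCirculant A) (hB : IsCirculant B)
    (hC : IsCirculant C) (hD : IsCirculant D) (c : ℤ)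
    (hgram : A * Aᵀ + B * Bᵀ + C * Cᵀ + D * Dᵀ = c • 1) :
    GSarray v A B C D * (GSarray v A B C D)ᵀ = c • 1 := by
  rw [GSarray_eq_comp, Matrix.transpose_comp, ← Matrix.compAlgEquiv_apply _ _ _ ℤ,
    ← Matrix.compAlgEquiv_apply _ _ _ ℤ, ← map_mul,
    gsBlocks_mul_transpose hA hB hC hD c hgram, map_smul, map_one]

theorem GSarray_add_transpose (hB : IsCirculant B) (hC : IsCirculant C) (hD : IsCirculant D)
    (hskew : A + Aᵀ = (2 : ℤ) • 1) :
    GSarray v A B C D + (GSarray v A B C D)ᵀ = (2 : ℤ) • 1 := by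
  rw [GSarray_eq_comp, Matrix.transpose_comp, ← Matrix.compAlgEquiv_apply _ _ _ ℤ,
    ← Matrix.compAlgEquiv_apply _ _ _ ℤ, ← map_add,
    gsBlocks_add_transpose hB hC hD hskew, map_smul, map_one]

theorem GSarray_apply_eq_one_or (hA : ∀ i j, A i j = 1 ∨ A i j = -1)
    (hB : ∀ i j, B i j = 1 ∨ B i j = -1) (hC : ∀ i j, C i j = 1 ∨ C i j = -1)
    (hD : ∀ i j, D i j = 1 ∨ D i j = -1) (p q : Fin 4 × ZMod v) :
    GSarray v A B C D p q = 1 ∨ GSarray v A B C D p q = -1 := by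
  obtain ⟨a, i⟩ := p
  obtain ⟨b, j⟩ := q
  have hneg : ∀ x : ℤ, x = 1 ∨ x = -1 → -x = 1 ∨ -x = -1 := by omega
  fin_cases a <;> fin_cases b <;>
    simp only [GSarray_eq_comp, Matrix.comp_apply, gsBlocks, Matrix.of_apply, Fin.zero_eta,
      Fin.mk_one, Fin.reduceFinMk, Matrix.cons_val, Matrix.neg_apply, mul_backDiag_apply,
      Matrix.transpose_apply]
  all_goals (try apply hneg); first | exact hA _ _ | exact hB _ _ | exact hC _ _ | exact hD _ _

end GoethalsSeidel

theorem pow_half_eq_one_or {K : Type*} [Field K] {q : ℕ} (hq : Odd q) {z : K} (hz : z ≠ 0)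
    (hzq : z ^ q = z) :
    z ^ ((q - 1) / 2) = 1 ∨ z ^ ((q - 1) / 2) = -1 := by
  obtain ⟨r, rfl⟩ := hq
  have h2r : z ^ (2 * r) = 1 := mul_right_cancel₀ hz (by rw [← pow_succ, hzq, one_mul])
  apply mul_self_eq_one_iff.mp
  rw [show (2 * r + 1 - 1) / 2 = r by omega, ← pow_add, ← two_mul, h2r]

section EulerSign

variable {K : Type*} [Field K] [DecidableEq K] {q : ℕ}

/-- The quadratic character of the subfield `{z | z ^ q = z}` of `K`, by Euler's criterion. -/
def eulerSign (q : ℕ) (z : K) : ℤ :=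
  if z = 0 then 0 else if z ^ ((q - 1) / 2) = 1 then 1 else -1

@[simp] theorem eulerSign_zero : eulerSign q (0 : K) = 0 := if_pos rfl

@[simp] theorem eulerSign_eq_zero_iff {z : K} : eulerSign q z = 0 ↔ z = 0 := by
  unfold eulerSign
  split_ifs <;> simp_all

theorem eulerSign_eq_one_or {z : K} (hz : z ≠ 0) : eulerSign q z = 1 ∨ eulerSign q z = -1 := by
  unfold eulerSign
  split_ifs <;> simp_all

theorem eulerSign_mul_self {z : K} (hz : z ≠ 0) : eulerSign q z * eulerSign q z = 1 := by
  rcases eulerSign_eq_one_or (q := q) hz with h | h <;> simp [h]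

theorem eulerSign_mul (hq : Odd q) (hK : (-1 : K) ≠ 1) {z₁ z₂ : K} (h₁ : z₁ ^ q = z₁)
    (h₂ : z₂ ^ q = z₂) : eulerSign q (z₁ * z₂) = eulerSign q z₁ * eulerSign q z₂ := by
  rcases eq_or_ne z₁ 0 with rfl | hz₁
  · simp
  rcases eq_or_ne z₂ 0 with rfl | hz₂
  · simp
  rcases pow_half_eq_one_or hq hz₁ h₁ with ha | ha <;>
    rcases pow_half_eq_one_or hq hz₂ h₂ with hb | hb <;>
    simp [eulerSign, hz₁, hz₂, mul_pow, ha, hb, hK]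

theorem eulerSign_neg (hq : q % 4 = 3) (hK : (-1 : K) ≠ 1) {z : K} (hz : z ^ q = z) :
    eulerSign q (-z) = -eulerSign q z := by
  have hodd : Odd q := Nat.odd_iff.mpr (by omega)
  have hhalf : Odd ((q - 1) / 2) := Nat.odd_iff.mpr (by omega)
  have hneg_one : eulerSign q (-1 : K) = -1 := by
    simp [eulerSign, hhalf.neg_one_pow, hK]
  rw [neg_eq_neg_one_mul, eulerSign_mul hodd hK hodd.neg_one_pow hz, hneg_one, neg_one_mul]

end EulerSign

section SkewForm

variable {K : Type*} [Field K] {q : ℕ} {θ : K}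

/-- For `K = 𝔽_{q²}` and `θ ^ q = -θ` this is an alternating `𝔽_q`-bilinear form on `K` with
values in `𝔽_q = {z | z ^ q = z}`. -/
def skewForm (q : ℕ) (θ x y : K) : K :=
  (x * y ^ q - x ^ q * y) / θ

theorem skewForm_swap (x y : K) : skewForm q θ y x = -skewForm q θ x y := by
  unfold skewForm; ring

theorem skewForm_self (x : K) : skewForm q θ x x = 0 := by
  unfold skewForm; ring

theorem skewForm_zero_right (hq : q ≠ 0) (x : K) : skewForm q θ x 0 = 0 := by
  simp [skewForm, hq]

theorem skewForm_neg_right (hq : Odd q) (x y : K) : skewForm q θ x (-y) = -skewForm q θ x y := by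
  unfold skewForm; rw [hq.neg_pow]; ring

theorem skewForm_mul_mul {u : K} (hu : u ^ (q + 1) = 1) (x y : K) :
    skewForm q θ (u * x) (u * y) = skewForm q θ x y := by
  unfold skewForm
  linear_combination (x * y ^ q - x ^ q * y) / θ * hu

theorem skewForm_add_smul (hadd : ∀ x y : K, (x + y) ^ q = x ^ q + y ^ q) {a b : K}
    (ha : a ^ q = a) (hb : b ^ q = b) (x y z : K) :
    skewForm q θ x (a * y + b * z) = a * skewForm q θ x y + b * skewForm q θ x z := by
  unfold skewForm
  rw [hadd, mul_pow, mul_pow, ha, hb]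
  ring

theorem skewForm_smul_right {a : K} (ha : a ^ q = a) (x y : K) :
    skewForm q θ x (a * y) = a * skewForm q θ x y := by
  unfold skewForm; rw [mul_pow, ha]; ring

theorem skewForm_pow_pow (hqq : ∀ z : K, (z ^ q) ^ q = z) (x y : K) :
    skewForm q θ (x ^ q) (y ^ q) = -skewForm q θ x y := by
  unfold skewForm
  rw [hqq, hqq]
  ring

theorem skewForm_pow_self (hq : Odd q) (hadd : ∀ x y : K, (x + y) ^ q = x ^ q + y ^ q)
    (hqq : ∀ z : K, (z ^ q) ^ q = z) (hθ : θ ^ q = -θ) (x y : K) :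
    skewForm q θ x y ^ q = skewForm q θ x y := by
  unfold skewForm
  simp only [div_pow, sub_eq_add_neg, hadd, hθ, hq.neg_pow, mul_pow, hqq]
  ring

theorem skewForm_eq_zero_iff (hθ : θ ≠ 0) (hq : q ≠ 0) {x y : K} (hx : x ≠ 0) (hy : y ≠ 0) :
    skewForm q θ x y = 0 ↔ y ^ (q - 1) = x ^ (q - 1) := by
  have hfac : x * y ^ q - x ^ q * y = x * y * (y ^ (q - 1) - x ^ (q - 1)) := by
    obtain ⟨r, rfl⟩ := Nat.exists_eq_add_one_of_ne_zero hq
    simp only [pow_succ, Nat.add_sub_cancel]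
    ring
  rw [skewForm, hfac, div_eq_zero_iff, or_iff_left hθ, mul_eq_zero,
    or_iff_right (mul_ne_zero hx hy), sub_eq_zero]

theorem skewForm_mul_eq (hθ : θ ≠ 0) (x y z : K) :
    skewForm q θ x y * z = skewForm q θ x z * y - skewForm q θ y z * x := by
  unfold skewForm; field_simp; ring

theorem skewForm_pow_mul (hqq : ∀ z : K, (z ^ q) ^ q = z) {x y : K} (hx : x ^ (q + 1) = 1)
    (hy : y ^ (q + 1) = 1) (z : K) : skewForm q θ x (z ^ q * y) = -skewForm q θ y (z * x) := by
  have hxy : (x * y) ^ (q + 1) = 1 := by rw [mul_pow, hx, hy, one_mul]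
  calc skewForm q θ x (z ^ q * y) = skewForm q θ (x * y * y ^ q) (x * y * (z * x) ^ q) := by
        congr 1
        · linear_combination -x * hy
        · linear_combination -(z ^ q * y) * hx
    _ = -skewForm q θ y (z * x) := by rw [skewForm_mul_mul hxy, skewForm_pow_pow hqq]

end SkewForm

theorem sum_units_eq_sum {M R : Type*} [GroupWithZero M] [Fintype M] [DecidableEq M]
    [AddCommMonoid R] (f : M → R) (h0 : f 0 = 0) : ∑ z : Mˣ, f z = ∑ z, f z := by
  have hzero : ∑ z : {a : M // ¬a ≠ 0}, f z = 0 :=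
    Finset.sum_eq_zero fun z _ => by rw [not_not.mp z.2, h0]
  rw [Fintype.sum_equiv unitsEquivNeZero (fun z : Mˣ => f z) (fun z => f z) fun _ => rfl,
    ← Fintype.sum_subtype_add_sum_subtype (· ≠ 0) f, hzero, add_zero]

/-- Additivity of `z ↦ z ^ q` says that `q` is a power of the characteristic, and `n` odd
means `q ≡ 3 [MOD 8]`. -/
structure SkewSetup (K : Type*) [Field K] [Fintype K] (q n : ℕ) (w : Kˣ) : Prop where
  card_eq : Fintype.card K = q ^ 2
  add_pow : ∀ x y : K, (x + y) ^ q = x ^ q + y ^ q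
  orderOf_eq : orderOf w = q ^ 2 - 1
  add_one_eq : q + 1 = 4 * n
  odd : Odd n

/-- `ξ ^ s` for `ξ = w ^ (4 (q - 1))`, an element of order `n` of the norm-one subgroup. -/
def circlePt {K : Type*} [Field K] (q : ℕ) {n : ℕ} (w : Kˣ) (s : ZMod n) : K :=
  (w : K) ^ (4 * (q - 1) * s.val)

/-- The powers `w ^ cosetExp q n b` represent the four cosets of `⟨w ^ 4⟩ = 𝔽_qˣ × ⟨ξ⟩` in `Kˣ`
when `n` is odd. -/
def cosetExp (q n : ℕ) : Fin 4 → ℕ := ![0, 2 * n, 1, q]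

def signMatrix {K : Type*} [Field K] [DecidableEq K] (q n : ℕ) (w : Kˣ) (c : ℕ) :
    Matrix (ZMod n) (ZMod n) ℤ :=
  Matrix.of fun s u =>
    eulerSign q (skewForm q ((w : K) ^ (2 * n)) (circlePt q w s) ((w : K) ^ c * circlePt q w u))

theorem signMatrix_apply {K : Type*} [Field K] [DecidableEq K] {q n : ℕ} (w : Kˣ) (c : ℕ)
    (s u : ZMod n) :
    signMatrix q n w c s u = eulerSign q
      (skewForm q ((w : K) ^ (2 * n)) (circlePt q w s) ((w : K) ^ c * circlePt q w u)) :=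
  rfl

theorem signMatrix_zero_apply_self {K : Type*} [Field K] [DecidableEq K] {q n : ℕ} (w : Kˣ)
    (s : ZMod n) : signMatrix q n w 0 s s = 0 := by
  simp [signMatrix_apply, skewForm_self]

namespace SkewSetup

variable {K : Type*} [Field K] [Fintype K] {q n : ℕ} {w : Kˣ} (S : SkewSetup K q n w)
include S

theorem q_mod_four : q % 4 = 3 := by have := S.add_one_eq; omega

theorem odd_q : Odd q := Nat.odd_iff.mpr (by have := S.q_mod_four; omega)

theorem q_ne_zero : q ≠ 0 := by have := S.q_mod_four; omega

theorem sq_sub_one_eq : q ^ 2 - 1 = 4 * n * (q - 1) := by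
  rw [← S.add_one_eq, ← Nat.sq_sub_sq, one_pow]

theorem pow_q_pow_q (z : K) : (z ^ q) ^ q = z := by
  rw [← pow_mul, ← sq, ← S.card_eq, FiniteField.pow_card]

theorem neg_one_ne_one : (-1 : K) ≠ 1 := by
  refine Ring.neg_one_ne_one_of_char_ne_two fun h => ?_
  have := (FiniteField.even_card_iff_char_two.mp h)
  rw [S.card_eq, Nat.pow_mod, Nat.odd_iff.mp S.odd_q] at this
  simp at this

theorem gen_pow_eq_gen_pow_iff (a b : ℕ) :
    (w : K) ^ a = (w : K) ^ b ↔ a ≡ b [MOD q ^ 2 - 1] := by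
  rw [← Units.val_pow_eq_pow_val, ← Units.val_pow_eq_pow_val, Units.val_inj,
    pow_eq_pow_iff_modEq, S.orderOf_eq]

theorem gen_pow_eq_one_iff (a : ℕ) : (w : K) ^ a = 1 ↔ q ^ 2 - 1 ∣ a := by
  rw [← pow_zero (w : K), S.gen_pow_eq_gen_pow_iff, Nat.modEq_zero_iff_dvd]

theorem gen_pow_half_orderOf : (w : K) ^ (2 * n * (q - 1)) = -1 := by
  have hsq : (w : K) ^ (2 * n * (q - 1)) * (w : K) ^ (2 * n * (q - 1)) = 1 := by
    rw [← pow_add, S.gen_pow_eq_one_iff, S.sq_sub_one_eq]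
    exact ⟨1, by ring⟩
  refine (mul_self_eq_one_iff.mp hsq).resolve_left fun h => ?_
  rw [S.gen_pow_eq_one_iff, S.sq_sub_one_eq] at h
  have hpos : 0 < n * (q - 1) := Nat.mul_pos S.odd.pos (by have := S.q_mod_four; omega)
  have := Nat.eq_zero_of_dvd_of_lt h (by nlinarith)
  nlinarith

theorem theta_pow_q : ((w : K) ^ (2 * n)) ^ q = -(w : K) ^ (2 * n) := by
  rw [← pow_sub_one_mul S.q_ne_zero, ← pow_mul, S.gen_pow_half_orderOf, neg_one_mul]

theorem skewForm_pow_self (x y : K) :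
    skewForm q ((w : K) ^ (2 * n)) x y ^ q = skewForm q ((w : K) ^ (2 * n)) x y :=
  _root_.skewForm_pow_self S.odd_q S.add_pow S.pow_q_pow_q S.theta_pow_q x y

theorem mu_pow_q : ((w : K) ^ (q + 1)) ^ q = (w : K) ^ (q + 1) := by
  have h : ((w : K) ^ (q + 1)) ^ (q - 1) = 1 := by
    rw [← pow_mul, S.gen_pow_eq_one_iff, ← Nat.sq_sub_sq, one_pow]
  rw [← pow_sub_one_mul S.q_ne_zero, h, one_mul]

theorem coprime_q_sub_one : Nat.Coprime n (q - 1) := by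
  have h2 : Nat.gcd n (q - 1) ∣ 2 := by
    rw [show 2 = 4 * n - (q - 1) by have := S.add_one_eq; omega]
    exact Nat.dvd_sub (dvd_mul_of_dvd_right (Nat.gcd_dvd_left _ _) 4) (Nat.gcd_dvd_right _ _)
  rcases (Nat.dvd_prime Nat.prime_two).mp h2 with h | h
  · exact h
  · have := (h ▸ Nat.gcd_dvd_left n (q - 1) : 2 ∣ n)
    exact absurd S.odd (Nat.not_odd_iff_even.mpr (even_iff_two_dvd.mpr this))

theorem eq_of_cosetExp_add_modEq [NeZero n] {b b' : Fin 4} {u u' : ZMod n}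
    (h : cosetExp q n b + 4 * (q - 1) * u.val ≡ cosetExp q n b' + 4 * (q - 1) * u'.val
      [MOD 4 * n]) : b = b' ∧ u = u' := by
  rw [mul_assoc, mul_assoc] at h
  have hb : b = b' := by
    have h4 := h.of_mul_right n
    unfold Nat.ModEq at h4
    generalize (q - 1) * u.val = x at h4
    generalize (q - 1) * u'.val = x' at h4
    have := S.q_mod_four
    have := Nat.odd_iff.mp S.odd
    fin_cases b <;> fin_cases b' <;> simp [cosetExp] at h4 ⊢ <;> omega
  subst hb
  refine ⟨rfl, ZMod.val_injective n ?_⟩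
  have hu := Nat.ModEq.cancel_left_of_coprime S.coprime_q_sub_one
    (Nat.ModEq.mul_left_cancel' four_ne_zero (Nat.ModEq.add_left_cancel' _ h))
  exact hu.eq_of_lt_of_lt (ZMod.val_lt u) (ZMod.val_lt u')

theorem pow_cosetExp_injective [NeZero n] :
    Function.Injective fun p : Fin 4 × ZMod n × Fin (q - 1) =>
      w ^ (cosetExp q n p.1 + 4 * (q - 1) * p.2.1.val + (q + 1) * p.2.2.val) := by
  rintro ⟨b, u, m⟩ ⟨b', u', m'⟩ h
  rw [pow_eq_pow_iff_modEq, S.orderOf_eq, S.sq_sub_one_eq] at h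
  have h4n : cosetExp q n b + 4 * (q - 1) * u.val ≡ cosetExp q n b' + 4 * (q - 1) * u'.val
      [MOD 4 * n] := by
    have := h.of_mul_right (q - 1)
    rwa [S.add_one_eq, Nat.ModEq, Nat.add_mul_mod_self_left, Nat.add_mul_mod_self_left] at this
  obtain ⟨rfl, rfl⟩ := S.eq_of_cosetExp_add_modEq h4n
  have hm := Nat.ModEq.add_left_cancel' _ h
  rw [← S.add_one_eq] at hm
  have hm' := Nat.ModEq.mul_left_cancel' (Nat.succ_ne_zero q) hm
  simp only [Prod.mk.injEq, true_and]
  exact Fin.ext (hm'.eq_of_lt_of_lt m.isLt m'.isLt)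

theorem circlePt_add [NeZero n] (s t : ZMod n) :
    circlePt q w (s + t) = circlePt q w s * circlePt q w t := by
  rw [circlePt, circlePt, circlePt, ← pow_add, S.gen_pow_eq_gen_pow_iff, S.sq_sub_one_eq,
    ZMod.val_add, ← mul_add, show 4 * n * (q - 1) = 4 * (q - 1) * n by ring]
  exact (Nat.mod_modEq _ n).mul_left' _

theorem circlePt_pow_succ (s : ZMod n) : circlePt q w s ^ (q + 1) = 1 := by
  rw [circlePt, ← pow_mul, S.gen_pow_eq_one_iff, S.sq_sub_one_eq]
  exact ⟨4 * s.val, by rw [S.add_one_eq]; ring⟩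

variable [DecidableEq K]

theorem eulerSign_mu : eulerSign q ((w : K) ^ (q + 1)) = -1 := by
  have hexp : (q + 1) * ((q - 1) / 2) = 2 * n * (q - 1) := by
    have h := S.add_one_eq
    rw [show (q - 1) / 2 = 2 * n - 1 by omega, show q - 1 = 2 * (2 * n - 1) by omega, h]
    ring
  rw [eulerSign, if_neg (pow_ne_zero _ w.ne_zero), ← pow_mul, hexp, S.gen_pow_half_orderOf,
    if_neg S.neg_one_ne_one]

theorem eulerSign_skewForm_swap (x y : K) :
    eulerSign q (skewForm q ((w : K) ^ (2 * n)) y x) =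
      -eulerSign q (skewForm q ((w : K) ^ (2 * n)) x y) := by
  rw [skewForm_swap, eulerSign_neg S.q_mod_four S.neg_one_ne_one (S.skewForm_pow_self x y)]

theorem isCirculant_signMatrix [NeZero n] (c : ℕ) : IsCirculant (signMatrix q n w c) := by
  intro s u v
  rw [signMatrix_apply, signMatrix_apply, S.circlePt_add, S.circlePt_add,
    mul_comm (circlePt q w s), show (w : K) ^ c * (circlePt q w u * circlePt q w v) =
      circlePt q w v * ((w : K) ^ c * circlePt q w u) by ring,
    skewForm_mul_mul (S.circlePt_pow_succ v)]

theorem transpose_signMatrix_zero : (signMatrix q n w 0)ᵀ = -signMatrix q n w 0 := by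
  ext s u
  simp only [Matrix.transpose_apply, Matrix.neg_apply, signMatrix_apply, pow_zero, one_mul]
  exact S.eulerSign_skewForm_swap _ _

theorem transpose_signMatrix_two_mul : (signMatrix q n w (2 * n))ᵀ = signMatrix q n w (2 * n) := by
  ext s u
  have h := skewForm_pow_mul (θ := (w : K) ^ (2 * n)) S.pow_q_pow_q (S.circlePt_pow_succ s)
    (S.circlePt_pow_succ u) ((w : K) ^ (2 * n))
  rw [S.theta_pow_q, neg_mul, skewForm_neg_right S.odd_q, neg_inj] at h
  rw [Matrix.transpose_apply, signMatrix_apply, signMatrix_apply, h]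

theorem signMatrix_q : signMatrix q n w q = -(signMatrix q n w 1)ᵀ := by
  ext s u
  rw [Matrix.neg_apply, Matrix.transpose_apply, signMatrix_apply, signMatrix_apply, pow_one,
    skewForm_pow_mul S.pow_q_pow_q (S.circlePt_pow_succ s) (S.circlePt_pow_succ u),
    eulerSign_neg S.q_mod_four S.neg_one_ne_one (S.skewForm_pow_self _ _)]

theorem signMatrix_apply_ne_zero [NeZero n] {b : Fin 4} {s u : ZMod n} (h : b ≠ 0 ∨ s ≠ u) :
    signMatrix q n w (cosetExp q n b) s u ≠ 0 := by
  rw [signMatrix_apply, Ne, eulerSign_eq_zero_iff, circlePt, circlePt, skewForm_eq_zero_iff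
    (pow_ne_zero _ w.ne_zero) S.q_ne_zero (pow_ne_zero _ w.ne_zero)
    (mul_ne_zero (pow_ne_zero _ w.ne_zero) (pow_ne_zero _ w.ne_zero)), ← pow_add, ← pow_mul,
    ← pow_mul, S.gen_pow_eq_gen_pow_iff, S.sq_sub_one_eq]
  intro hmod
  have hq : q - 1 ≠ 0 := by have := S.q_mod_four; omega
  obtain ⟨rfl, rfl⟩ := S.eq_of_cosetExp_add_modEq (b' := 0)
    (by simpa [cosetExp] using Nat.ModEq.mul_right_cancel' hq hmod)
  simp at h

theorem sum_eulerSign_fixed :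
    ∑ z ∈ Finset.univ.filter (fun z : K => z ^ q = z), eulerSign q z = 0 := by
  set F := Finset.univ.filter (fun z : K => z ^ q = z)
  have hμ : (w : K) ^ (q + 1) ≠ 0 := pow_ne_zero _ w.ne_zero
  have hmul : ∑ z ∈ F, eulerSign q ((w : K) ^ (q + 1) * z) = ∑ z ∈ F, eulerSign q z :=
    Finset.sum_equiv (Equiv.mulLeft₀ _ hμ)
      (fun z => by simp [F, mul_pow, S.mu_pow_q, mul_right_inj' hμ]) (fun _ _ => rfl)
  have hneg : ∀ z ∈ F, eulerSign q ((w : K) ^ (q + 1) * z) = -eulerSign q z := fun z hz => by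
    rw [eulerSign_mul S.odd_q S.neg_one_ne_one S.mu_pow_q (Finset.mem_filter.mp hz).2,
      S.eulerSign_mu, neg_one_mul]
  rw [Finset.sum_congr rfl hneg, Finset.sum_neg_distrib] at hmul
  omega

theorem sum_eulerSign_skewForm_mul {x y : K}
    (hxy : skewForm q ((w : K) ^ (2 * n)) x y ≠ 0) :
    ∑ z : K, eulerSign q (skewForm q ((w : K) ^ (2 * n)) x z) *
      eulerSign q (skewForm q ((w : K) ^ (2 * n)) y z) = 0 := by
  set θ := (w : K) ^ (2 * n)
  set F := Finset.univ.filter (fun z : K => z ^ q = z)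
  set d := skewForm q θ x y with hd_def
  have hF : ∀ a b : K, skewForm q θ a b ∈ F := fun a b =>
    Finset.mem_filter.mpr ⟨Finset.mem_univ _, S.skewForm_pow_self a b⟩
  have hd : d ^ q = d := S.skewForm_pow_self x y
  -- `z ↦ (D(x, z), D(y, z))` is inverted by Cramer's rule `skewForm_mul_eq`
  calc ∑ z : K, eulerSign q (skewForm q θ x z) * eulerSign q (skewForm q θ y z)
      = ∑ p ∈ F ×ˢ F, eulerSign q p.1 * eulerSign q p.2 := by
        refine Finset.sum_nbij' (fun z => (skewForm q θ x z, skewForm q θ y z))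
          (fun p => p.1 / d * y + -p.2 / d * x) (fun z _ => Finset.mem_product.mpr ⟨hF _ _, hF _ _⟩)
          (fun _ _ => Finset.mem_univ _) (fun z _ => ?_) (fun p hp => ?_) (fun _ _ => rfl)
        · field_simp
          linear_combination (skewForm_mul_eq (pow_ne_zero _ w.ne_zero) x y z).symm
        · simp only [F, Finset.mem_product, Finset.mem_filter, Finset.mem_univ, true_and] at hp
          rw [skewForm_add_smul S.add_pow (by rw [div_pow, hp.1, hd])
            (by rw [div_pow, S.odd_q.neg_pow, hp.2, hd]), skewForm_add_smul S.add_pow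
            (by rw [div_pow, hp.1, hd]) (by rw [div_pow, S.odd_q.neg_pow, hp.2, hd]),
            skewForm_self, skewForm_self, skewForm_swap x y, ← hd_def]
          ext <;> field_simp <;> ring
    _ = (∑ a ∈ F, eulerSign q a) * ∑ b ∈ F, eulerSign q b := by
        rw [Finset.sum_product, Finset.sum_mul_sum]
    _ = 0 := by rw [S.sum_eulerSign_fixed, zero_mul]

theorem sum_units_eq_sum_cosets [NeZero n] (g : K → ℤ)
    (hg : ∀ a z : K, a ^ q = a → a ≠ 0 → g (a * z) = g z) :
    ∑ z : Kˣ, g z = (q - 1 : ℕ) * ∑ b : Fin 4, ∑ u : ZMod n,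
      g ((w : K) ^ cosetExp q n b * circlePt q w u) := by
  have hbij := (Fintype.bijective_iff_injective_and_card _).mpr ⟨S.pow_cosetExp_injective, by
    simp only [Fintype.card_prod, Fintype.card_fin, ZMod.card, Fintype.card_units, S.card_eq,
      S.sq_sub_one_eq]; ring⟩
  rw [← Fintype.sum_bijective _ hbij _ _ fun _ => rfl, Fintype.sum_prod_type, Finset.mul_sum]
  refine Finset.sum_congr rfl fun b _ => ?_
  rw [Fintype.sum_prod_type, Finset.mul_sum]
  refine Finset.sum_congr rfl fun u _ => ?_
  have hμ : ∀ m : ℕ, (((w : K) ^ (q + 1)) ^ m) ^ q = ((w : K) ^ (q + 1)) ^ m := fun m => by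
    rw [← pow_mul, mul_comm, pow_mul, S.mu_pow_q]
  have hterm : ∀ m : Fin (q - 1),
      g ((w ^ (cosetExp q n b + 4 * (q - 1) * u.val + (q + 1) * m.val) : Kˣ) : K) =
        g ((w : K) ^ cosetExp q n b * circlePt q w u) := fun m => by
    rw [Units.val_pow_eq_pow_val, pow_add, pow_add, pow_mul (w : K) (q + 1), circlePt, mul_comm,
      hg _ _ (hμ m.val) (pow_ne_zero _ (pow_ne_zero _ w.ne_zero))]
  simp only [hterm, Finset.sum_const, Finset.card_univ, Fintype.card_fin, nsmul_eq_mul]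

theorem sum_signMatrix_mul_of_ne [NeZero n] {s t : ZMod n} (hst : s ≠ t) :
    ∑ b : Fin 4, ∑ u : ZMod n,
      signMatrix q n w (cosetExp q n b) s u * signMatrix q n w (cosetExp q n b) t u = 0 := by
  set θ := (w : K) ^ (2 * n)
  set g : K → ℤ := fun z => eulerSign q (skewForm q θ (circlePt q w s) z) *
    eulerSign q (skewForm q θ (circlePt q w t) z) with hg
  have hD : skewForm q θ (circlePt q w s) (circlePt q w t) ≠ 0 := by
    simpa [signMatrix_apply, cosetExp] using S.signMatrix_apply_ne_zero (b := 0) (Or.inr hst)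
  have hinv : ∀ a z : K, a ^ q = a → a ≠ 0 → g (a * z) = g z := fun a z ha ha0 => by
    dsimp only [g]
    rw [skewForm_smul_right ha, skewForm_smul_right ha,
      eulerSign_mul S.odd_q S.neg_one_ne_one ha (S.skewForm_pow_self _ _),
      eulerSign_mul S.odd_q S.neg_one_ne_one ha (S.skewForm_pow_self _ _)]
    linear_combination g z * eulerSign_mul_self (q := q) ha0
  have h := S.sum_units_eq_sum_cosets g hinv
  rw [sum_units_eq_sum g (by simp [hg, skewForm_zero_right S.q_ne_zero]),
    S.sum_eulerSign_skewForm_mul hD, eq_comm, mul_eq_zero] at h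
  exact h.resolve_left (by have := S.q_mod_four; omega)

theorem signMatrix_apply_eq_one_or [NeZero n] {b : Fin 4} {s u : ZMod n} (h : b ≠ 0 ∨ s ≠ u) :
    signMatrix q n w (cosetExp q n b) s u = 1 ∨ signMatrix q n w (cosetExp q n b) s u = -1 := by
  have hne := S.signMatrix_apply_ne_zero h
  rw [signMatrix_apply, Ne, eulerSign_eq_zero_iff] at hne
  exact eulerSign_eq_one_or hne

theorem sum_signMatrix_mul_self [NeZero n] (s : ZMod n) :
    ∑ b : Fin 4, ∑ u : ZMod n,
      signMatrix q n w (cosetExp q n b) s u * signMatrix q n w (cosetExp q n b) s u = q := by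
  have hterm : ∀ b u, signMatrix q n w (cosetExp q n b) s u * signMatrix q n w (cosetExp q n b) s u
      = 1 - if b = 0 ∧ s = u then 1 else 0 := by
    intro b u
    split_ifs with h
    · obtain ⟨rfl, rfl⟩ := h
      simp [cosetExp, signMatrix_zero_apply_self]
    · rcases S.signMatrix_apply_eq_one_or (not_and_or.mp h) with h1 | h1 <;> simp [h1]
  have hq : (q : ℤ) + 1 = 4 * n := by exact_mod_cast S.add_one_eq
  simp only [hterm, Finset.sum_sub_distrib, ite_and, Fin.sum_univ_four]
  simp
  linarith

theorem sum_signMatrix_mul_transpose [NeZero n] :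
    ∑ b : Fin 4, signMatrix q n w (cosetExp q n b) * (signMatrix q n w (cosetExp q n b))ᵀ =
      (q : ℤ) • 1 := by
  ext s t
  simp only [Matrix.sum_apply, Matrix.mul_apply, Matrix.transpose_apply, Matrix.smul_apply,
    Matrix.one_apply]
  split_ifs with h
  · rw [h, S.sum_signMatrix_mul_self, smul_eq_mul, mul_one]
  · rw [S.sum_signMatrix_mul_of_ne h, smul_zero]

theorem one_add_signMatrix_zero_apply_eq_one_or [NeZero n] (i j : ZMod n) :
    (1 + signMatrix q n w 0) i j = 1 ∨ (1 + signMatrix q n w 0) i j = -1 := by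
  rcases eq_or_ne i j with rfl | h
  · simp [signMatrix_zero_apply_self]
  · simpa [Matrix.one_apply_ne h, cosetExp] using S.signMatrix_apply_eq_one_or (b := 0) (Or.inr h)

theorem gram_eq [NeZero n] :
    (1 + signMatrix q n w 0) * (1 + signMatrix q n w 0)ᵀ +
      signMatrix q n w (2 * n) * (signMatrix q n w (2 * n))ᵀ +
      signMatrix q n w 1 * (signMatrix q n w 1)ᵀ + signMatrix q n w 1 * (signMatrix q n w 1)ᵀ =
    ((4 * n : ℕ) : ℤ) • 1 := by
  have hA : (1 + signMatrix q n w 0) * (1 + signMatrix q n w 0)ᵀ =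
      1 + signMatrix q n w 0 * (signMatrix q n w 0)ᵀ := by
    rw [Matrix.transpose_add, Matrix.transpose_one, S.transpose_signMatrix_zero]
    noncomm_ring
  have hq : signMatrix q n w q * (signMatrix q n w q)ᵀ =
      signMatrix q n w 1 * (signMatrix q n w 1)ᵀ := by
    rw [S.signMatrix_q, Matrix.transpose_neg, Matrix.transpose_transpose, neg_mul_neg,
      (S.isCirculant_signMatrix 1).transpose.mul_comm (S.isCirculant_signMatrix 1)]
  have h := S.sum_signMatrix_mul_transpose
  simp only [Fin.sum_univ_four, cosetExp, Matrix.cons_val, hq] at h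
  rw [hA, ← S.add_one_eq, Nat.cast_add, Nat.cast_one, add_smul, one_smul, ← h]
  abel

theorem exists_circulant_matrices [NeZero n] : ∃ A B C D : Matrix (ZMod n) (ZMod n) ℤ,
    IsCirculant A ∧ IsCirculant B ∧ IsCirculant C ∧ IsCirculant D ∧
    (∀ i j, A i j = 1 ∨ A i j = -1) ∧ (∀ i j, B i j = 1 ∨ B i j = -1) ∧
    (∀ i j, C i j = 1 ∨ C i j = -1) ∧ (∀ i j, D i j = 1 ∨ D i j = -1) ∧
    A * Aᵀ + B * Bᵀ + C * Cᵀ + D * Dᵀ = ((4 * n : ℕ) : ℤ) • 1 ∧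
    A + Aᵀ = (2 : ℤ) • 1 ∧ Bᵀ = B ∧ C = D := by
  have hC : ∀ i j, signMatrix q n w 1 i j = 1 ∨ signMatrix q n w 1 i j = -1 := fun i j =>
    S.signMatrix_apply_eq_one_or (b := 2) (Or.inl (by decide))
  refine ⟨1 + signMatrix q n w 0, signMatrix q n w (2 * n), signMatrix q n w 1,
    signMatrix q n w 1, IsCirculant.one.add (S.isCirculant_signMatrix 0),
    S.isCirculant_signMatrix _, S.isCirculant_signMatrix _, S.isCirculant_signMatrix _,
    S.one_add_signMatrix_zero_apply_eq_one_or,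
    fun i j => S.signMatrix_apply_eq_one_or (b := 1) (Or.inl (by decide)), hC, hC, S.gram_eq,
    ?_, S.transpose_signMatrix_two_mul, rfl⟩
  rw [Matrix.transpose_add, Matrix.transpose_one, S.transpose_signMatrix_zero, two_smul]
  abel

end SkewSetup

theorem exists_skewSetup {K : Type*} [Field K] [Fintype K] {p k n : ℕ} [Fact p.Prime]
    [CharP K p] (hK : Fintype.card K = (p ^ k) ^ 2) (hn : p ^ k + 1 = 4 * n) (hodd : Odd n) :
    ∃ w : Kˣ, SkewSetup K (p ^ k) n w := by
  classical
  obtain ⟨w, hw⟩ := IsCyclic.exists_generator (α := Kˣ)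
  refine ⟨w, hK, fun x y => add_pow_char_pow x y p k, ?_, hn, hodd⟩
  rw [orderOf_eq_card_of_forall_mem_zpowers hw, Nat.card_eq_fintype_card, Fintype.card_units, hK]

/-- Let `q = 4n - 1` be a prime power with `q ≡ 3 (mod 8)`. Then there exist
circulant `±1` matrices `A, B, C, D` of order `n` such that
`A·Aᵀ + B·Bᵀ + C·Cᵀ + D·Dᵀ = 4n·I`, `(I - A)ᵀ = -(I - A)` (i.e. `A + Aᵀ = 2·I`),
`Bᵀ = B` and `C = D`; consequently the Goethals–Seidel array built from them is a
(skew) Hadamard matrix of order `4n` of Goethals–Seidel type. -/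
theorem exists_skew_hadamard_goethals_seidel (q n : ℕ) [NeZero n]
    (hq : IsPrimePow q) (hq8 : q % 8 = 3) (hn : q + 1 = 4 * n) :
    ∃ A B C D : Matrix (ZMod n) (ZMod n) ℤ,
      IsCirculant A ∧ IsCirculant B ∧ IsCirculant C ∧ IsCirculant D ∧
      (∀ i j, A i j = 1 ∨ A i j = -1) ∧
      (∀ i j, B i j = 1 ∨ B i j = -1) ∧
      (∀ i j, C i j = 1 ∨ C i j = -1) ∧
      (∀ i j, D i j = 1 ∨ D i j = -1) ∧
      A * Aᵀ + B * Bᵀ + C * Cᵀ + D * Dᵀ =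
        ((4 * n : ℕ) : ℤ) • (1 : Matrix (ZMod n) (ZMod n) ℤ) ∧
      ((1 : Matrix (ZMod n) (ZMod n) ℤ) - A)ᵀ = -((1 : Matrix (ZMod n) (ZMod n) ℤ) - A) ∧
      Bᵀ = B ∧ C = D ∧
      (∀ p q', GSarray n A B C D p q' = 1 ∨ GSarray n A B C D p q' = -1) ∧
      GSarray n A B C D * (GSarray n A B C D)ᵀ =
        ((4 * n : ℕ) : ℤ) • (1 : Matrix (Fin 4 × ZMod n) (Fin 4 × ZMod n) ℤ) ∧
      GSarray n A B C D + (GSarray n A B C D)ᵀ =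
        (2 : ℤ) • (1 : Matrix (Fin 4 × ZMod n) (Fin 4 × ZMod n) ℤ) := by
  classical
  have hodd : Odd n := Nat.odd_iff.mpr (by omega)
  obtain ⟨p, k, hp, hk, rfl⟩ := (isPrimePow_nat_iff q).mp hq
  have : Fact p.Prime := ⟨hp⟩
  let := Fintype.ofFinite (GaloisField p (2 * k))
  obtain ⟨w, S⟩ := exists_skewSetup (K := GaloisField p (2 * k)) (by
    rw [← Nat.card_eq_fintype_card, GaloisField.card p _ (by omega), ← pow_mul, mul_comm]) hn hodd
  obtain ⟨A, B, C, D, hA, hB, hC, hD, hAe, hBe, hCe, hDe, hgram, hskew, hBsym, hCD⟩ :=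
    S.exists_circulant_matrices
  refine ⟨A, B, C, D, hA, hB, hC, hD, hAe, hBe, hCe, hDe, hgram, ?_, hBsym, hCD,
    GSarray_apply_eq_one_or hAe hBe hCe hDe, GSarray_mul_transpose hA hB hC hD _ hgram,
    GSarray_add_transpose hB hC hD hskew⟩
  rw [transpose_sub, transpose_one, eq_sub_of_add_eq' hskew, two_smul]
  abel
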